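/- Let l ≥ 1 and let A₀ be the type-D structure over the torus algebra 𝒜 (a 'vertical chain') with basis {ξ, κ₁, …, κ_l, ξ′} and δ¹ξ = ρ₁ ⊗ κ₁, δ¹κ₁ = 0, δ¹κ_m = ρ₂₃ ⊗ κ_{m−1} for 2 ≤ m ≤ l, δ¹ξ′ = ρ₁₂₃ ⊗ κ_l. Define φ : A₀ → 𝒜 ⊗ A₀ by φ(ξ) = 1 ⊗ ξ, φ(κ₁) = 1 ⊗ κ₁, φ(κ_m) = 1 ⊗ κ_m + 1 ⊗ κ_{m−1} for 2 ≤ m ≤ l, and φ(ξ′) = 1 ⊗ ξ′ + ρ₁ ⊗ κ_l. Then φ is a chain map, and there exists an integer ν ≥ 1 such that the ν-fold composite φ ∘ ⋯ ∘ φ equals the identity morphism id_{A₀}; consequently the direct limit of the direct system A₀ →^φ A₀ →^φ ⋯ is isomorphic to A₀. -/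

import Mathlib

/-- The torus algebra: the 8-dimensional `F₂`-algebra with basis
`{ι₀, ι₁, ρ₁, ρ₂, ρ₃, ρ₁₂, ρ₂₃, ρ₁₂₃}`, encoded by its full multiplication table. -/
structure TorusAlg (A : Type) [Ring A] [Algebra (ZMod 2) A] where
  i0 : A
  i1 : A
  r1 : A
  r2 : A
  r3 : A
  r12 : A
  r23 : A
  r123 : A
  basis_indep : LinearIndependent (ZMod 2) ![i0, i1, r1, r2, r3, r12, r23, r123]
  basis_span : Submodule.span (ZMod 2)
      ({i0, i1, r1, r2, r3, r12, r23, r123} : Set A) = ⊤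
  sum_idem : i0 + i1 = 1
  i0_i0 : i0 * i0 = i0
  i1_i1 : i1 * i1 = i1
  i0_i1 : i0 * i1 = 0
  i1_i0 : i1 * i0 = 0
  i0_r1 : i0 * r1 = r1
  r1_i1 : r1 * i1 = r1
  i1_r2 : i1 * r2 = r2
  r2_i0 : r2 * i0 = r2
  i0_r3 : i0 * r3 = r3
  r3_i1 : r3 * i1 = r3
  i0_r12 : i0 * r12 = r12
  r12_i0 : r12 * i0 = r12
  i1_r23 : i1 * r23 = r23
  r23_i1 : r23 * i1 = r23
  i0_r123 : i0 * r123 = r123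
  r123_i1 : r123 * i1 = r123
  r1_r2 : r1 * r2 = r12
  r2_r3 : r2 * r3 = r23
  r1_r23 : r1 * r23 = r123
  r12_r3 : r12 * r3 = r123
  r1_r1 : r1 * r1 = 0
  r1_r3 : r1 * r3 = 0
  r1_r12 : r1 * r12 = 0
  r1_r123 : r1 * r123 = 0
  r2_r1 : r2 * r1 = 0
  r2_r2 : r2 * r2 = 0
  r2_r12 : r2 * r12 = 0
  r2_r23 : r2 * r23 = 0
  r2_r123 : r2 * r123 = 0
  r3_r1 : r3 * r1 = 0
  r3_r2 : r3 * r2 = 0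
  r3_r3 : r3 * r3 = 0
  r3_r12 : r3 * r12 = 0
  r3_r23 : r3 * r23 = 0
  r3_r123 : r3 * r123 = 0
  r12_r1 : r12 * r1 = 0
  r12_r2 : r12 * r2 = 0
  r12_r12 : r12 * r12 = 0
  r12_r23 : r12 * r23 = 0
  r12_r123 : r12 * r123 = 0
  r23_r1 : r23 * r1 = 0
  r23_r2 : r23 * r2 = 0
  r23_r3 : r23 * r3 = 0
  r23_r12 : r23 * r12 = 0
  r23_r23 : r23 * r23 = 0
  r23_r123 : r23 * r123 = 0
  r123_r1 : r123 * r1 = 0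
  r123_r2 : r123 * r2 = 0
  r123_r3 : r123 * r3 = 0
  r123_r12 : r123 * r12 = 0
  r123_r23 : r123 * r23 = 0
  r123_r123 : r123 * r123 = 0

variable {A : Type} [Ring A] [Algebra (ZMod 2) A]

/-- Composition of morphisms of type-D structures, in matrix form. -/
def matComp {ι κ σ : Type} [Fintype κ] (F : ι → κ → A) (G : κ → σ → A) :
    ι → σ → A :=
  fun i s => ∑ j, F i j * G j s

/-- The identity morphism, in matrix form. -/
def matId {ι : Type} [DecidableEq ι] : ι → ι → A :=
  fun i j => if i = j then 1 else 0

/-- The differential of a morphism of type-D structures, in matrix form: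
`∂F = F · d_N + d_M · F`. -/
def matDiff {ι κ : Type} [Fintype ι] [Fintype κ]
    (dM : ι → ι → A) (dN : κ → κ → A) (F : ι → κ → A) : ι → κ → A :=
  fun i k => (∑ j, F i j * dN j k) + (∑ j, dM i j * F j k)

/-- The type-D structure equation `(μ ⊗ id) ∘ (id ⊗ δ¹) ∘ δ¹ = 0`, in matrix form. -/
def IsTypeD {ι : Type} [Fintype ι] (d : ι → ι → A) : Prop :=
  ∀ i k, (∑ j, d i j * d j k) = 0

/-- A morphism is a chain map when its differential vanishes. -/
def IsChainMap {ι κ : Type} [Fintype ι] [Fintype κ]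
    (dM : ι → ι → A) (dN : κ → κ → A) (F : ι → κ → A) : Prop :=
  matDiff dM dN F = 0

/-- Homotopy equivalence of two type-D structures, in matrix form:
chain maps `F`, `G` with `G ∘ F + id = ∂H` and `F ∘ G + id = ∂H'`. -/
def HtpyEquiv {ι κ : Type} [Fintype ι] [Fintype κ] [DecidableEq ι] [DecidableEq κ]
    (dM : ι → ι → A) (dN : κ → κ → A) : Prop :=
  ∃ (F : ι → κ → A) (G : κ → ι → A) (H : ι → ι → A) (H' : κ → κ → A),
    IsChainMap dM dN F ∧ IsChainMap dN dM G ∧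
    matComp F G + matId = matDiff dM dM H ∧
    matComp G F + matId = matDiff dN dN H'

/-- The `A`-linear map `𝒜 ⊗ M → 𝒜 ⊗ N` induced by a matrix-form morphism of
type-D structures, in the coordinates `𝒜 ⊗ M ≅ (ι → 𝒜)`:
`a ⊗ e_j ↦ Σ_k a·F j k ⊗ e_k`. -/
def matMap {ι κ : Type} [Fintype ι] (F : ι → κ → A) :
    (ι → A) →ₗ[A] (κ → A) where
  toFun v := fun k => ∑ j, v j * F j k
  map_add' u v := by
    funext k
    simp [add_mul, Finset.sum_add_distrib]
  map_smul' a v := by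
    funext k
    simp [Finset.mul_sum, mul_assoc]

/-- Iterated composition (`n`-fold power) of an endomorphism matrix;
`matPow F 0` is the identity morphism. -/
def matPow {ι : Type} [Fintype ι] [DecidableEq ι] (F : ι → ι → A) :
    ℕ → (ι → ι → A)
  | 0 => matId
  | n + 1 => matComp F (matPow F n)

/-- The differential of the vertical chain `A₀` with basis
`{ξ = 0, κ₁ = 1, …, κ_l = l, ξ′ = l+1}`:
`δ¹ξ = ρ₁ ⊗ κ₁`, `δ¹κ₁ = 0`, `δ¹κ_m = ρ₂₃ ⊗ κ_{m-1}` for `2 ≤ m ≤ l`,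
`δ¹ξ′ = ρ₁₂₃ ⊗ κ_l`. -/
def dV (T : TorusAlg A) (l : ℕ) : Fin (l + 2) → Fin (l + 2) → A :=
  fun i j =>
    if (i : ℕ) = 0 ∧ (j : ℕ) = 1 then T.r1
    else if 2 ≤ (i : ℕ) ∧ (i : ℕ) ≤ l ∧ (j : ℕ) + 1 = (i : ℕ) then T.r23
    else if (i : ℕ) = l + 1 ∧ (j : ℕ) = l then T.r123
    else 0

/-- The morphism `φ`: `φ(ξ) = 1 ⊗ ξ`, `φ(κ₁) = 1 ⊗ κ₁`,
`φ(κ_m) = 1 ⊗ κ_m + 1 ⊗ κ_{m-1}` for `2 ≤ m ≤ l`, `φ(ξ′) = 1 ⊗ ξ′ + ρ₁ ⊗ κ_l`. -/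
def fV (T : TorusAlg A) (l : ℕ) : Fin (l + 2) → Fin (l + 2) → A :=
  fun i j =>
    if (i : ℕ) = (j : ℕ) then 1
    else if 2 ≤ (i : ℕ) ∧ (i : ℕ) ≤ l ∧ (j : ℕ) + 1 = (i : ℕ) then 1
    else if (i : ℕ) = l + 1 ∧ (j : ℕ) = l then T.r1
    else 0

/-- The directed system `𝒜 ⊗ A₀ → 𝒜 ⊗ A₀ → ⋯` induced by iterating `φ`. -/
noncomputable def connV (T : TorusAlg A) (l : ℕ) :
    ∀ i j : ℕ, i ≤ j → (Fin (l + 2) → A) →ₗ[A] (Fin (l + 2) → A) :=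
  fun i j _ => (matMap (fV T l) ^ (j - i) : Module.End A (Fin (l + 2) → A))


/-!
Write `φ = 1 + N`. The matrix `N` strictly lowers the index in the ordered basis
`ξ, κ₁, …, κ_l, ξ′`, so it is nilpotent, and a direct computation shows that it commutes with
`δ¹`. Over `𝔽₂` this makes `φ` a chain map and gives `φ^(2^k) = 1 + N^(2^k) = 1` for large `k`.
Once the connecting map is invertible, the direct limit is identified with its first term,
the `i`-th copy being sent to it by `φ⁻ⁱ`, which commutes with `δ¹`.
-/

lemma two_eq_zero_of_zmod_two (R : Type*) [Ring R] [Algebra (ZMod 2) R] : (2 : R) = 0 := by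
  rw [← map_ofNat (algebraMap (ZMod 2) R) 2]
  exact map_zero _

lemma add_self_eq_zero_of_zmod_two {R : Type*} [Ring R] [Algebra (ZMod 2) R] (x : R) :
    x + x = 0 := by
  rw [← two_mul, two_eq_zero_of_zmod_two, zero_mul]

lemma one_add_pow_two_pow {R : Type*} [Ring R] [Algebra (ZMod 2) R] (x : R) (k : ℕ) :
    (1 + x) ^ 2 ^ k = 1 + x ^ 2 ^ k := by
  induction k with
  | zero => simp
  | succ k ih =>
    rw [pow_succ, pow_mul, pow_mul, ih, (Commute.one_left _).add_sq, two_eq_zero_of_zmod_two]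
    simp

lemma Matrix.pow_apply_eq_zero_of_lt_add {R : Type*} [Semiring R] {n : ℕ}
    {M : Matrix (Fin n) (Fin n) R} (hM : ∀ i j, M i j ≠ 0 → j < i) (m : ℕ) :
    ∀ i j : Fin n, (i : ℕ) < j + m → (M ^ m) i j = 0 := by
  induction m with
  | zero =>
    intro i j hij
    rw [pow_zero, Matrix.one_apply_ne (Fin.ne_of_lt hij)]
  | succ m ih =>
    intro i j hij
    rw [pow_succ', Matrix.mul_apply]
    refine Finset.sum_eq_zero fun c _ => ?_
    by_cases hic : c < i
    · rw [ih c j (by omega), mul_zero]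
    · rw [not_imp_comm.mp (hM i c) hic, zero_mul]

lemma Matrix.pow_card_eq_zero_of_strictLower {R : Type*} [Semiring R] {n : ℕ}
    {M : Matrix (Fin n) (Fin n) R} (hM : ∀ i j, M i j ≠ 0 → j < i) : M ^ n = 0 := by
  ext i j
  exact Matrix.pow_apply_eq_zero_of_lt_add hM n i j (by omega)

section MatrixForm

variable {R ι : Type} [Ring R]

lemma matDiff_eq_mul_add_mul {κ : Type} [Fintype ι] [Fintype κ] (dM : ι → ι → R)
    (dN : κ → κ → R) (F : ι → κ → R) :
    matDiff dM dN F = Matrix.of F * Matrix.of dN + Matrix.of dM * Matrix.of F := rfl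

lemma matMap_apply {κ : Type} [Fintype ι] (F : ι → κ → R) (v : ι → R) :
    matMap F v = Matrix.vecMul v (Matrix.of F) := rfl

lemma matPow_eq_pow [Fintype ι] [DecidableEq ι] (F : ι → ι → R) (n : ℕ) :
    matPow F n = Matrix.of F ^ n := by
  induction n with
  | zero => rfl
  | succ n ih =>
    show matComp F (matPow F n) = _
    rw [ih, pow_succ']
    rfl

lemma matMap_pow [Fintype ι] [DecidableEq ι] (F : ι → ι → R) (n : ℕ) :
    (matMap F : Module.End R (ι → R)) ^ n = matMap (matPow F n) := by
  refine LinearMap.ext fun v => ?_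
  induction n generalizing v with
  | zero => exact (Matrix.vecMul_one v).symm
  | succ n ih =>
    rw [pow_succ, Module.End.mul_apply, ih, matMap_apply, matMap_apply, matMap_apply,
      Matrix.vecMul_vecMul, matPow_eq_pow, matPow_eq_pow, pow_succ']
    rfl

lemma commute_matMap [Fintype ι] {F G : ι → ι → R} (h : Commute (Matrix.of F) (Matrix.of G)) :
    Commute (matMap F : Module.End R (ι → R)) (matMap G) :=
  LinearMap.ext fun v => by
    simp only [Module.End.mul_apply, matMap_apply, Matrix.vecMul_vecMul, h.eq]

end MatrixForm

section PowSystem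

variable {R M : Type} [Ring R] [AddCommGroup M] [Module R M]

def powSystem (f : Module.End R M) : ∀ i j : ℕ, i ≤ j → M →ₗ[R] M :=
  fun i j _ => f ^ (j - i)

lemma inv_pow_mul_pow_sub {G : Type*} [Group G] (u : G) {i j : ℕ} (hij : i ≤ j) :
    u⁻¹ ^ j * u ^ (j - i) = u⁻¹ ^ i := by
  obtain ⟨d, rfl⟩ := Nat.exists_eq_add_of_le hij
  rw [Nat.add_sub_cancel_left, pow_add, mul_assoc, inv_pow u d, inv_mul_cancel, mul_one]

variable {f : Module.End R M} (hf : IsUnit f)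
include hf

lemma powSystem_eq_val_pow (i j : ℕ) (hij : i ≤ j) :
    powSystem f i j hij = ↑(hf.unit ^ (j - i)) := by
  rw [powSystem, Units.val_pow_eq_pow_val, hf.unit_spec]

noncomputable def powSystemLimitEquiv :
    Module.DirectLimit (fun _ : ℕ => M) (powSystem f) ≃ₗ[R] M :=
  LinearEquiv.ofLinearMap
    (Module.DirectLimit.lift R ℕ _ _ (fun i => ↑(hf.unit⁻¹ ^ i)) fun i j hij x => by
      rw [powSystem_eq_val_pow hf, ← Module.End.mul_apply, ← Units.val_mul,
        inv_pow_mul_pow_sub _ hij])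
    (Module.DirectLimit.of R ℕ _ (powSystem f) 0)
    (by ext x; simp)
    (by
      ext i x
      simp only [LinearMap.coe_comp, Function.comp_apply, Module.DirectLimit.lift_of,
        LinearMap.id_comp]
      rw [← Module.DirectLimit.of_f (hij := Nat.zero_le i), powSystem_eq_val_pow hf,
        Nat.sub_zero, ← Module.End.mul_apply, ← Units.val_mul, inv_pow, mul_inv_cancel,
        Units.val_one, Module.End.one_apply])

lemma powSystemLimitEquiv_of (i : ℕ) (x : M) :
    powSystemLimitEquiv hf (Module.DirectLimit.of R ℕ _ _ i x) =
      (↑(hf.unit⁻¹ ^ i) : Module.End R M) x := by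
  rw [powSystemLimitEquiv, LinearEquiv.coe_ofLinearMap, Module.DirectLimit.lift_of]

omit hf in
noncomputable def powSystemLimitMap (D : Module.End R M) (hD : Commute D f) :
    Module.End R (Module.DirectLimit (fun _ : ℕ => M) (powSystem f)) :=
  Module.DirectLimit.map (fun _ => D) fun i j _ => by
    rw [powSystem, ← Module.End.mul_eq_comp, ← Module.End.mul_eq_comp, (hD.pow_right (j - i)).eq]

omit hf in
lemma powSystemLimitMap_of (D : Module.End R M) (hD : Commute D f) (i : ℕ) (x : M) :
    powSystemLimitMap D hD (Module.DirectLimit.of R ℕ _ _ i x) =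
      Module.DirectLimit.of R ℕ _ _ i (D x) := by
  rw [powSystemLimitMap, Module.DirectLimit.map_apply_of]

lemma powSystemLimitEquiv_map (D : Module.End R M) (hD : Commute D f)
    (z : Module.DirectLimit (fun _ : ℕ => M) (powSystem f)) :
    powSystemLimitEquiv hf (powSystemLimitMap D hD z) = D (powSystemLimitEquiv hf z) := by
  have hDu : Commute D ↑hf.unit⁻¹ := by
    rw [← hf.unit_spec] at hD
    exact hD.units_inv_right
  induction z using Module.DirectLimit.induction_on with
  | ih i x =>
    rw [powSystemLimitMap_of, powSystemLimitEquiv_of,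
      powSystemLimitEquiv_of, ← Module.End.mul_apply, ← Module.End.mul_apply,
      Units.val_pow_eq_pow_val, (hDu.pow_right i).eq]

end PowSystem

section VerticalChain

def nV (T : TorusAlg A) (l : ℕ) : Fin (l + 2) → Fin (l + 2) → A :=
  fun i j =>
    if 2 ≤ (i : ℕ) ∧ (i : ℕ) ≤ l ∧ (j : ℕ) + 1 = (i : ℕ) then 1
    else if (i : ℕ) = l + 1 ∧ (j : ℕ) = l then T.r1
    else 0

variable (T : TorusAlg A) (l : ℕ)

lemma of_fV_eq_one_add : Matrix.of (fV T l) = 1 + Matrix.of (nV T l) := by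
  ext i j
  simp only [Matrix.of_apply, Matrix.add_apply, Matrix.one_apply, fV, nV, Fin.ext_iff]
  split_ifs <;> first | omega | rfl | simp

lemma nV_ne_zero (i j : Fin (l + 2)) (h : nV T l i j ≠ 0) : j < i := by
  simp only [nV] at h
  split_ifs at h <;> first | omega | exact absurd rfl h

def downV (i : Fin (l + 2)) : Fin (l + 2) :=
  ⟨if (i : ℕ) = 0 then 1 else i - 1, by split_ifs <;> omega⟩

lemma dV_eq_zero_of_ne {i j : Fin (l + 2)} (h : j ≠ downV l i) : dV T l i j = 0 := by
  simp only [dV, downV, ne_eq, Fin.ext_iff] at h ⊢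
  split_ifs at h ⊢ <;> first | rfl | omega

lemma nV_eq_zero_of_ne {i j : Fin (l + 2)} (h : j ≠ downV l i) : nV T l i j = 0 := by
  simp only [nV, downV, ne_eq, Fin.ext_iff] at h ⊢
  split_ifs at h ⊢ <;> first | rfl | omega

-- Every row `i` of `dV` and of `nV` is supported in the single column `downV l i`, so both
-- products reduce to one term per entry, and these agree by `ρ₁ ρ₂₃ = ρ₁₂₃` and `ρ₁ ρ₁ = 0`.
lemma commute_dV_nV : Commute (Matrix.of (dV T l)) (Matrix.of (nV T l)) := by
  ext i k
  rw [Matrix.mul_apply, Matrix.mul_apply,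
    Fintype.sum_eq_single (downV l i) fun j hj => by
      rw [Matrix.of_apply, dV_eq_zero_of_ne T l hj, zero_mul],
    Fintype.sum_eq_single (downV l i) fun j hj => by
      rw [Matrix.of_apply, nV_eq_zero_of_ne T l hj, zero_mul]]
  simp only [Matrix.of_apply, dV, nV, downV]
  split_ifs <;> first | omega | simp only [mul_one, one_mul, mul_zero, zero_mul, T.r1_r23, T.r1_r1]

lemma commute_dV_fV : Commute (Matrix.of (dV T l)) (Matrix.of (fV T l)) := by
  rw [of_fV_eq_one_add]
  exact (Commute.one_right _).add_right (commute_dV_nV T l)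

lemma fV_isChainMap : IsChainMap (dV T l) (dV T l) (fV T l) := by
  rw [IsChainMap, matDiff_eq_mul_add_mul, (commute_dV_fV T l).eq, add_self_eq_zero_of_zmod_two]
  rfl

lemma matPow_fV_two_pow : matPow (fV T l) (2 ^ (l + 1)) = matId := by
  have hN : Matrix.of (nV T l) ^ (l + 2) = 0 :=
    Matrix.pow_card_eq_zero_of_strictLower (nV_ne_zero T l)
  rw [matPow_eq_pow, of_fV_eq_one_add, one_add_pow_two_pow,
    pow_eq_zero_of_le Nat.lt_two_pow_self hN, add_zero]
  rfl

end VerticalChain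

theorem statement9_general (A : Type) [Ring A] [Algebra (ZMod 2) A] (T : TorusAlg A)
    (l : ℕ) :
    -- `φ` is a chain map
    IsChainMap (dV T l) (dV T l) (fV T l) ∧
    -- some `ν`-fold composite of `φ` is the identity morphism
    (∃ ν : ℕ, 1 ≤ ν ∧ matPow (fV T l) ν = matId) ∧
    -- consequently the direct limit of the direct system is isomorphic to `A₀`,
    -- compatibly with the induced differentials
    (∃ Dlim : Module.DirectLimit (R := A) (fun _ : ℕ => (Fin (l + 2) → A)) (connV T l) →ₗ[A]
          Module.DirectLimit (R := A) (fun _ : ℕ => (Fin (l + 2) → A)) (connV T l),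
      (∀ (i : ℕ) (v : Fin (l + 2) → A),
        Dlim (Module.DirectLimit.of A ℕ (fun _ : ℕ => (Fin (l + 2) → A)) (connV T l) i v) =
          Module.DirectLimit.of A ℕ (fun _ : ℕ => (Fin (l + 2) → A)) (connV T l) i
            (matMap (dV T l) v)) ∧
      ∃ e : Module.DirectLimit (R := A) (fun _ : ℕ => (Fin (l + 2) → A)) (connV T l) ≃ₗ[A]
          (Fin (l + 2) → A),
        ∀ z, e (Dlim z) = matMap (dV T l) (e z)) := by
  have hφ : (matMap (fV T l) : Module.End A (Fin (l + 2) → A)) ^ 2 ^ (l + 1) = 1 := by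
    rw [matMap_pow, matPow_fV_two_pow]
    exact LinearMap.ext Matrix.vecMul_one
  have hu : IsUnit (matMap (fV T l) : Module.End A (Fin (l + 2) → A)) :=
    IsUnit.of_pow_eq_one hφ (by positivity)
  have hD := commute_matMap (commute_dV_fV T l)
  exact ⟨fV_isChainMap T l, ⟨2 ^ (l + 1), Nat.one_le_two_pow, matPow_fV_two_pow T l⟩,
    powSystemLimitMap _ hD, powSystemLimitMap_of _ hD, powSystemLimitEquiv hu,
    powSystemLimitEquiv_map hu _ hD⟩

theorem statement9 (A : Type) [Ring A] [Algebra (ZMod 2) A] (T : TorusAlg A)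
    (l : ℕ) (hl : 1 ≤ l) :
    -- `φ` is a chain map
    IsChainMap (dV T l) (dV T l) (fV T l) ∧
    -- some `ν`-fold composite of `φ` is the identity morphism
    (∃ ν : ℕ, 1 ≤ ν ∧ matPow (fV T l) ν = matId) ∧
    -- consequently the direct limit of the direct system is isomorphic to `A₀`,
    -- compatibly with the induced differentials
    (∃ Dlim : Module.DirectLimit (R := A) (fun _ : ℕ => (Fin (l + 2) → A)) (connV T l) →ₗ[A]
          Module.DirectLimit (R := A) (fun _ : ℕ => (Fin (l + 2) → A)) (connV T l),
      (∀ (i : ℕ) (v : Fin (l + 2) → A),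
        Dlim (Module.DirectLimit.of A ℕ (fun _ : ℕ => (Fin (l + 2) → A)) (connV T l) i v) =
          Module.DirectLimit.of A ℕ (fun _ : ℕ => (Fin (l + 2) → A)) (connV T l) i
            (matMap (dV T l) v)) ∧
      ∃ e : Module.DirectLimit (R := A) (fun _ : ℕ => (Fin (l + 2) → A)) (connV T l) ≃ₗ[A]
          (Fin (l + 2) → A),
        ∀ z, e (Dlim z) = matMap (dV T l) (e z)) :=
  statement9_general A T l
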